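/- Let π ∈ S_n with n ≥ 2. If |π(1) − π(n)| = 1, π(1) ≠ n, and π(n) ≠ 1, then the domination number of the permutation graph G_π equals 2 and {π(1), π(n)} is a minimum dominating set. -/

import Mathlib

/-- The permutation graph of `π`: vertices `0,…,n-1` (0-indexed version of `1,…,n`),
with `i < j` adjacent iff `π⁻¹ i > π⁻¹ j`. -/
def permGraph {n : ℕ} (π : Equiv.Perm (Fin n)) : SimpleGraph (Fin n) where
  Adj i j := (i < j ∧ π.symm j < π.symm i) ∨ (j < i ∧ π.symm i < π.symm j)
  symm := ⟨by intro i j h; tauto⟩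
  loopless := ⟨by intro i h; rcases h with ⟨h, _⟩ | ⟨h, _⟩ <;> exact lt_irrefl i h⟩

/-- `D` dominates `G`: every vertex is in `D` or adjacent to an element of `D`. -/
def Dominates {V : Type*} (G : SimpleGraph V) (D : Set V) : Prop :=
  ∀ v, v ∈ D ∨ ∃ d ∈ D, G.Adj v d

/-- The domination number: minimum cardinality of a dominating set. -/
noncomputable def domNumber {V : Type*} [Fintype V] (G : SimpleGraph V) : ℕ :=
  sInf {k | ∃ D : Finset V, D.card = k ∧ Dominates G ↑D}

/-- Closed neighborhood `N[x]`. -/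
def closedNbhd {V : Type*} (G : SimpleGraph V) (x : V) : Set V :=
  {y | y = x ∨ G.Adj x y}

/-- Degree of a vertex. -/
noncomputable def deg {V : Type*} (G : SimpleGraph V) (v : V) : ℕ :=
  (G.neighborSet v).ncard

/-!
The entry `π(1)` at the first position is adjacent exactly to the smaller values, and `π(n)` at
the last position exactly to the larger ones. When these two values are consecutive, every other
vertex lies below `π(1)` or above `π(n)`, so `{π(1), π(n)}` dominates. A single dominating vertex
equals or is adjacent to both `π(1)` and `π(n)`, so it lies between them and is one of them; but
`π(1)` sees nothing above it and `π(n)` nothing below it, so it would be the maximum resp. the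
minimum value.
-/

section Domination

variable {V : Type*} {G : SimpleGraph V}

theorem Dominates.mono {D E : Set V} (hD : Dominates G D) (hDE : D ⊆ E) : Dominates G E :=
  fun v => (hD v).imp (@hDE v) fun ⟨d, hd, hvd⟩ => ⟨d, hDE hd, hvd⟩

theorem dominates_singleton_iff {d : V} : Dominates G {d} ↔ ∀ v, v = d ∨ G.Adj v d := by
  simp only [Dominates, Set.mem_singleton_iff, exists_eq_left]

theorem dominates_univ : Dominates G Set.univ :=
  fun _ => Or.inl trivial

variable [Fintype V]

theorem domNumber_le_card {D : Finset V} (hD : Dominates G ↑D) : domNumber G ≤ D.card :=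
  Nat.sInf_le ⟨D, rfl, hD⟩

theorem two_le_domNumber [Nonempty V] (h : ∀ d, ¬ Dominates G {d}) : 2 ≤ domNumber G := by
  refine le_csInf ⟨_, Finset.univ, rfl, by simpa using dominates_univ⟩ ?_
  rintro _ ⟨D, rfl, hD⟩
  by_contra! hcard
  obtain ⟨d, hDd⟩ := Finset.card_le_one_iff_subset_singleton.mp (Nat.le_of_lt_succ hcard)
  exact h d (hD.mono (by exact_mod_cast hDd))

end Domination

section PermGraph

variable {n : ℕ} {π : Equiv.Perm (Fin n)} {i : Fin n}

theorem permGraph_adj_apply_iff_of_isBot (hi : IsBot i) (v : Fin n) :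
    (permGraph π).Adj (π i) v ↔ v < π i := by
  simp only [permGraph, Equiv.symm_apply_apply]
  refine ⟨fun h => h.elim (fun h => absurd h.2 (hi _).not_gt) And.left,
    fun hv => Or.inr ⟨hv, hi.lt_of_ne ?_⟩⟩
  rintro rfl
  simp at hv

theorem permGraph_adj_apply_iff_of_isTop (hi : IsTop i) (v : Fin n) :
    (permGraph π).Adj (π i) v ↔ π i < v := by
  simp only [permGraph, Equiv.symm_apply_apply]
  refine ⟨fun h => h.elim And.left (fun h => absurd h.2 (hi _).not_gt),
    fun hv => Or.inl ⟨hv, hi.lt_of_ne ?_⟩⟩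
  rintro rfl
  simp at hv

theorem permGraph_dominates_pair_of_isBot_of_isTop {j : Fin n} (hi : IsBot i) (hj : IsTop j)
    (h : (π j : ℕ) ≤ π i + 1) : Dominates (permGraph π) {π i, π j} := by
  intro v
  rcases lt_or_ge v (π i) with hvi | hiv
  · exact Or.inr ⟨π i, by simp, ((permGraph_adj_apply_iff_of_isBot hi v).mpr hvi).symm⟩
  rcases lt_or_ge (π j) v with hjv | hvj
  · exact Or.inr ⟨π j, by simp, ((permGraph_adj_apply_iff_of_isTop hj v).mpr hjv).symm⟩
  simp only [Set.mem_insert_iff, Set.mem_singleton_iff, Fin.ext_iff]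
  rw [Fin.le_def] at hiv hvj
  omega

theorem le_of_permGraph_dominates_singleton_of_isBot {d : Fin n} (hi : IsBot i)
    (hd : Dominates (permGraph π) {d}) : d ≤ π i := by
  rcases dominates_singleton_iff.mp hd (π i) with h | h
  · exact h.ge
  · exact ((permGraph_adj_apply_iff_of_isBot hi d).mp h).le

theorem le_of_permGraph_dominates_singleton_of_isTop {d : Fin n} (hi : IsTop i)
    (hd : Dominates (permGraph π) {d}) : π i ≤ d := by
  rcases dominates_singleton_iff.mp hd (π i) with h | h
  · exact h.le
  · exact ((permGraph_adj_apply_iff_of_isTop hi d).mp h).le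

theorem isTop_of_permGraph_dominates_singleton_of_isBot (hi : IsBot i)
    (hd : Dominates (permGraph π) {π i}) : IsTop (π i) := by
  intro v
  rcases dominates_singleton_iff.mp hd v with h | h
  · exact h.le
  · exact ((permGraph_adj_apply_iff_of_isBot hi v).mp h.symm).le

theorem isBot_of_permGraph_dominates_singleton_of_isTop (hi : IsTop i)
    (hd : Dominates (permGraph π) {π i}) : IsBot (π i) := by
  intro v
  rcases dominates_singleton_iff.mp hd v with h | h
  · exact h.ge
  · exact ((permGraph_adj_apply_iff_of_isTop hi v).mp h.symm).le

end PermGraph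

theorem consecutive_endpoints_dominating {n : ℕ} (hn : 2 ≤ n) (π : Equiv.Perm (Fin n))
    (hval : ((π ⟨0, by omega⟩ : ℤ) - (π ⟨n - 1, by omega⟩ : ℤ)).natAbs = 1)
    (h1 : π ⟨0, by omega⟩ ≠ ⟨n - 1, by omega⟩)
    (h2 : π ⟨n - 1, by omega⟩ ≠ ⟨0, by omega⟩) :
    domNumber (permGraph π) = 2 ∧
      Dominates (permGraph π) {π ⟨0, by omega⟩, π ⟨n - 1, by omega⟩} := by
  set first : Fin n := ⟨0, by omega⟩
  set last : Fin n := ⟨n - 1, by omega⟩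
  have hfirst : IsBot first := fun j => Fin.le_def.mpr (Nat.zero_le _)
  have hlast : IsTop last := fun j => Fin.le_def.mpr (Nat.le_sub_one_of_lt j.isLt)
  have hdom := permGraph_dominates_pair_of_isBot_of_isTop (π := π) hfirst hlast (by omega)
  have : Nonempty (Fin n) := ⟨first⟩
  refine ⟨le_antisymm ?_ (two_le_domNumber fun d hd => ?_), hdom⟩
  · exact (domNumber_le_card (D := {_, _}) (by simpa using hdom)).trans Finset.card_le_two
  have hd_le := le_of_permGraph_dominates_singleton_of_isBot hfirst hd
  have hd_ge := le_of_permGraph_dominates_singleton_of_isTop hlast hd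
  obtain rfl | rfl : d = π first ∨ d = π last := by
    simp only [Fin.le_def, Fin.ext_iff] at hd_le hd_ge ⊢
    omega
  · exact h1 (le_antisymm (hlast _) (isTop_of_permGraph_dominates_singleton_of_isBot hfirst hd _))
  · exact h2 (le_antisymm (isBot_of_permGraph_dominates_singleton_of_isTop hlast hd _) (hfirst _))
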